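/- arXiv:2510.17337 — 9 statements merged into one kernel-verified Lean document; each statement's English description precedes it below -/
import Mathlib

section
/- If a C³₃(v,k,λ)-cube exists with λ·v·(v−1) = k·(k−v), then every 1-dimensional subarray (row) of the cube has sum k/v; in particular v divides k. -/
open Finset

/-- A `C³₃(v,k,λ)`-cube: a `v×v×v` array over `{0,1}` in which every layer
(2-dimensional subarray obtained by fixing one coordinate) contains exactly `k`
ones, and any two distinct parallel layers have scalar product `lam`. -/
def IsCube (v k lam : ℕ) (A : Fin v → Fin v → Fin v → ℕ) : Prop :=
  (∀ x y z, A x y z ≤ 1) ∧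
  (∀ x, ∑ y, ∑ z, A x y z = k) ∧
  (∀ y, ∑ x, ∑ z, A x y z = k) ∧
  (∀ z, ∑ x, ∑ y, A x y z = k) ∧
  (∀ x₁ x₂, x₁ ≠ x₂ → ∑ y, ∑ z, A x₁ y z * A x₂ y z = lam) ∧
  (∀ y₁ y₂, y₁ ≠ y₂ → ∑ x, ∑ z, A x y₁ z * A x y₂ z = lam) ∧
  (∀ z₁ z₂, z₁ ≠ z₂ → ∑ x, ∑ y, A x y z₁ * A x y z₂ = lam)

/-! Fix a direction and flatten each layer into a row of length `v²`. The column sums `r_p`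
(the line sums of the cube in that direction) satisfy `∑ r_p = v k` and, expanding the square
into scalar products of layers, `∑ r_p² = v (k + (v - 1) λ) = k²` by the hypothesis on the
parameters. Hence `∑ (v r_p - k)² = 0`, so every line sum equals `k / v`. -/

theorem mul_eq_of_sum_sq_eq {R ι : Type*} [CommRing R] [LinearOrder R] [IsStrictOrderedRing R]
    [Fintype ι] (f : ι → R) {a b : R} (h₁ : a * ∑ i, f i = Fintype.card ι * b)
    (h₂ : a ^ 2 * ∑ i, f i ^ 2 = Fintype.card ι * b ^ 2) (i : ι) : a * f i = b := by
  have hzero : ∑ i, (a * f i - b) ^ 2 = 0 :=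
    calc ∑ i, (a * f i - b) ^ 2
        = a ^ 2 * ∑ i, f i ^ 2 - 2 * b * (a * ∑ i, f i) + Fintype.card ι * b ^ 2 := by
          simp only [sub_sq, sum_add_distrib, sum_sub_distrib, mul_sum, sum_const, card_univ,
            nsmul_eq_mul]
          congr 1; congr 1 <;> refine sum_congr rfl fun _ _ => by ring
      _ = 0 := by rw [h₁, h₂]; ring
  have := (sum_eq_zero_iff_of_nonneg fun i _ => sq_nonneg _).1 hzero i (mem_univ i)
  exact sub_eq_zero.1 (pow_eq_zero_iff two_ne_zero |>.1 this)

section Incidence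

variable {ι κ : Type*} [Fintype ι] [Fintype κ] {M : ι → κ → ℤ} {k lam : ℤ}

theorem sum_sq_sum_eq_of_inner_eq (hidem : ∀ i p, M i p ^ 2 = M i p)
    (hrow : ∀ i, ∑ p, M i p = k) (hinner : ∀ i j, i ≠ j → ∑ p, M i p * M j p = lam) :
    ∑ p, (∑ i, M i p) ^ 2 = Fintype.card ι * (k + (Fintype.card ι - 1) * lam) := by
  classical
  have hrowsum (i : ι) : ∑ j, ∑ p, M i p * M j p = k + (Fintype.card ι - 1) * lam := by
    have hself : ∑ p, M i p * M i p = k := by simp only [← sq, hidem, hrow]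
    have hcard : ((univ.erase i).card : ℤ) = Fintype.card ι - 1 := by
      rw [card_erase_of_mem (mem_univ i), card_univ,
        Nat.cast_sub (Fintype.card_pos_iff.2 ⟨i⟩)]
      rfl
    rw [← add_sum_erase _ _ (mem_univ i), hself,
      sum_congr rfl fun j hj => hinner i j (ne_of_mem_erase hj).symm, sum_const, nsmul_eq_mul,
      hcard]
  calc ∑ p, (∑ i, M i p) ^ 2 = ∑ i, ∑ j, ∑ p, M i p * M j p := by
        simp only [sq, sum_mul_sum]
        rw [sum_comm]
        exact sum_congr rfl fun i _ => sum_comm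
    _ = Fintype.card ι * (k + (Fintype.card ι - 1) * lam) := by
        simp only [hrowsum, sum_const, card_univ, nsmul_eq_mul]

theorem card_mul_sum_eq_of_inner_eq (hidem : ∀ i p, M i p ^ 2 = M i p)
    (hrow : ∀ i, ∑ p, M i p = k) (hinner : ∀ i j, i ≠ j → ∑ p, M i p * M j p = lam)
    (hparam : (Fintype.card κ : ℤ) * (k + (Fintype.card ι - 1) * lam) = Fintype.card ι * k ^ 2)
    (p : κ) : Fintype.card κ * ∑ i, M i p = Fintype.card ι * k := by
  have hsum : ∑ p, ∑ i, M i p = Fintype.card ι * k := by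
    rw [sum_comm]; simp only [hrow, sum_const, card_univ, nsmul_eq_mul]
  refine mul_eq_of_sum_sq_eq (fun p => ∑ i, M i p) ?_ ?_ p
  · rw [hsum]
  · rw [sum_sq_sum_eq_of_inner_eq hidem hrow hinner]
    linear_combination (Fintype.card κ * Fintype.card ι : ℤ) * hparam

end Incidence

theorem mul_sum_eq_of_layers {v k lam : ℕ} (hv : 0 < v) (B : Fin v → Fin v → Fin v → ℕ)
    (h01 : ∀ x y z, B x y z ≤ 1) (hlayer : ∀ x, ∑ y, ∑ z, B x y z = k)
    (hsc : ∀ x₁ x₂, x₁ ≠ x₂ → ∑ y, ∑ z, B x₁ y z * B x₂ y z = lam)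
    (heq : (lam : ℤ) * v * (v - 1) = (k : ℤ) * ((k : ℤ) - v)) (y z : Fin v) :
    v * ∑ x, B x y z = k := by
  set M : Fin v → Fin v × Fin v → ℤ := fun x p => B x p.1 p.2
  have hidem (x p) : M x p ^ 2 = M x p := by
    rcases Nat.le_one_iff_eq_zero_or_eq_one.1 (h01 x p.1 p.2) with h | h <;> simp [M, h]
  have hrow (x) : ∑ p, M x p = k := by
    simp only [M, Fintype.sum_prod_type]; exact_mod_cast hlayer x
  have hinner (x₁ x₂) (hne : x₁ ≠ x₂) : ∑ p, M x₁ p * M x₂ p = lam := by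
    simp only [M, Fintype.sum_prod_type]; exact_mod_cast hsc x₁ x₂ hne
  have hparam : (Fintype.card (Fin v × Fin v) : ℤ) * (k + (Fintype.card (Fin v) - 1) * lam)
      = Fintype.card (Fin v) * (k : ℤ) ^ 2 := by
    simp only [Fintype.card_prod, Fintype.card_fin]; push_cast
    linear_combination (v : ℤ) * heq
  have hcol := card_mul_sum_eq_of_inner_eq hidem hrow hinner hparam (y, z)
  simp only [Fintype.card_prod, Fintype.card_fin, M] at hcol
  have hcancel : (v : ℤ) * (v * ∑ x, B x y z) = v * k := by
    push_cast at hcol ⊢; linear_combination hcol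
  exact_mod_cast mul_left_cancel₀ (by positivity) hcancel

theorem stmt1 (v k lam : ℕ) (hv : 0 < v) (A : Fin v → Fin v → Fin v → ℕ)
    (hA : IsCube v k lam A)
    (heq : (lam : ℤ) * v * (v - 1) = (k : ℤ) * ((k : ℤ) - v)) :
    v ∣ k ∧
    (∀ x y, ∑ z, A x y z = k / v) ∧
    (∀ x z, ∑ y, A x y z = k / v) ∧
    (∀ y z, ∑ x, A x y z = k / v) := by
  obtain ⟨h01, hx, hy, hz, sx, sy, sz⟩ := hA
  have kx := mul_sum_eq_of_layers hv A h01 hx sx heq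
  have ky (x z) := mul_sum_eq_of_layers hv (fun b a c => A a b c) (fun b a c => h01 a b c)
    hy sy heq x z
  have kz (x y) := mul_sum_eq_of_layers hv (fun c a b => A a b c) (fun c a b => h01 a b c)
    hz sz heq x y
  refine ⟨⟨_, (kx ⟨0, hv⟩ ⟨0, hv⟩).symm⟩, fun x y => ?_, fun x z => ?_, fun y z => ?_⟩
  · rw [← kz x y, Nat.mul_div_cancel_left _ hv]
  · rw [← ky x z, Nat.mul_div_cancel_left _ hv]
  · rw [← kx y z, Nat.mul_div_cancel_left _ hv]
end

section
/- If a C³₃(v,k,λ)-cube exists and v does not divide k, then λ·(v−1) ≥ k·(⌊k/v⌋ + ⌈k/v⌉ − 1) − v·⌊k/v⌋·⌈k/v⌉. -/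
/-!
Let `S y z` be the number of ones on the line through `(y, z)` parallel to the `x`-axis. Counting
the ones and the pairs of ones inside the `x`-layers gives `∑ S = v k` and
`∑ S² = v (k + (v - 1) λ)`. As `⌊k/v⌋ ≤ ⌈k/v⌉ ≤ ⌊k/v⌋ + 1`, no integer lies strictly between them,
so `(S - ⌊k/v⌋) (S - ⌈k/v⌉) ≥ 0` for every line; summing over the `v²` lines and dividing by `v`
gives the bound.
-/

open Finset

lemma sub_mul_sub_nonneg_of_le_add_one {a f c : ℤ} (hfc : f ≤ c) (hcf : c ≤ f + 1) :
    0 ≤ (a - f) * (a - c) := by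
  rcases le_or_gt a f with h | h
  · nlinarith
  · nlinarith

lemma add_mul_sum_sub_le_sum_sq {P : Type*} [Fintype P] (S : P → ℤ) {f c : ℤ}
    (hfc : f ≤ c) (hcf : c ≤ f + 1) :
    (f + c) * ∑ p, S p - Fintype.card P * f * c ≤ ∑ p, S p ^ 2 := by
  have hnonneg : 0 ≤ ∑ p, (S p - f) * (S p - c) :=
    sum_nonneg fun p _ => sub_mul_sub_nonneg_of_le_add_one hfc hcf
  have hexpand : ∑ p, (S p - f) * (S p - c) =
      ∑ p, S p ^ 2 - (f + c) * ∑ p, S p + Fintype.card P * f * c := by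
    simp only [fun p => show (S p - f) * (S p - c) = S p ^ 2 - (f + c) * S p + f * c by ring,
      sum_add_distrib, sum_sub_distrib, ← mul_sum, sum_const, card_univ, nsmul_eq_mul]
    ring
  linarith

section Layers

variable {ι P : Type*} [Fintype ι] [Fintype P] (B : ι → P → ℕ) {k lam : ℕ}

lemma sum_sum_layers_eq (hrow : ∀ i, ∑ p, B i p = k) :
    ∑ p, ∑ i, B i p = Fintype.card ι * k := by
  rw [sum_comm]
  simp [hrow]

lemma sum_sq_sum_layers_eq [DecidableEq ι] (h01 : ∀ i p, B i p ≤ 1)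
    (hrow : ∀ i, ∑ p, B i p = k) (hpair : ∀ i j, i ≠ j → ∑ p, B i p * B j p = lam) :
    ∑ p, (∑ i, B i p) ^ 2 = Fintype.card ι * (k + (Fintype.card ι - 1) * lam) := by
  have hdiag (i : ι) : ∑ p, B i p * B i p = k := by
    rw [← hrow i]
    refine sum_congr rfl fun p _ => ?_
    rcases Nat.le_one_iff_eq_zero_or_eq_one.mp (h01 i p) with h | h <;> simp [h]
  have hrow_sum (i : ι) : ∑ j, ∑ p, B i p * B j p = k + (Fintype.card ι - 1) * lam := by
    rw [← add_sum_erase _ _ (mem_univ i), hdiag,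
      sum_congr rfl fun j hj => hpair i j (ne_of_mem_erase hj).symm]
    simp [card_erase_of_mem, mul_comm]
  calc ∑ p, (∑ i, B i p) ^ 2 = ∑ p, ∑ i, ∑ j, B i p * B j p := by
        simp only [sq, sum_mul_sum]
    _ = ∑ i, ∑ j, ∑ p, B i p * B j p := by
        rw [sum_comm]
        exact sum_congr rfl fun i _ => sum_comm
    _ = Fintype.card ι * (k + (Fintype.card ι - 1) * lam) := by
        simp [hrow_sum]

end Layers

theorem stmt2_general (v k lam : ℕ) (hv : 0 < v) (A : Fin v → Fin v → Fin v → ℕ)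
    (hA : IsCube v k lam A) :
    (lam : ℤ) * (v - 1) ≥
      (k : ℤ) * (((k / v : ℕ) : ℤ) + (((k + v - 1) / v : ℕ) : ℤ) - 1) -
        (v : ℤ) * ((k / v : ℕ) : ℤ) * (((k + v - 1) / v : ℕ) : ℤ) := by
  obtain ⟨h01, hrow, -, -, hpair, -, -⟩ := hA
  set B : Fin v → Fin v × Fin v → ℕ := fun x p => A x p.1 p.2
  have hrowB (x : Fin v) : ∑ p, B x p = k := by
    rw [Fintype.sum_prod_type]; exact hrow x
  have hpairB (x₁ x₂ : Fin v) (hne : x₁ ≠ x₂) : ∑ p, B x₁ p * B x₂ p = lam := by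
    rw [Fintype.sum_prod_type]; exact hpair x₁ x₂ hne
  have hfc : k / v ≤ (k + v - 1) / v := Nat.div_le_div_right (by omega)
  have hcf : (k + v - 1) / v ≤ k / v + 1 :=
    (Nat.div_le_div_right (by omega)).trans_eq (Nat.add_div_right k hv)
  have key := add_mul_sum_sub_le_sum_sq (fun p => ((∑ x, B x p : ℕ) : ℤ))
    (f := ((k / v : ℕ) : ℤ)) (c := (((k + v - 1) / v : ℕ) : ℤ)) (by exact_mod_cast hfc)
    (by exact_mod_cast hcf)
  rw [← Nat.cast_sum, sum_sum_layers_eq B hrowB] at key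
  simp only [← Nat.cast_pow, ← Nat.cast_sum] at key
  rw [sum_sq_sum_layers_eq B (fun x p => h01 x p.1 p.2) hrowB hpairB] at key
  simp only [Fintype.card_prod, Fintype.card_fin] at key
  generalize ((k / v : ℕ) : ℤ) = f, (((k + v - 1) / v : ℕ) : ℤ) = c at key ⊢
  push_cast [Nat.cast_sub hv] at key
  refine le_of_mul_le_mul_left ?_ (by exact_mod_cast hv : (0 : ℤ) < v)
  linarith

theorem stmt2 (v k lam : ℕ) (hv : 0 < v) (A : Fin v → Fin v → Fin v → ℕ)
    (hA : IsCube v k lam A) (hk : ¬ v ∣ k) :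
    (lam : ℤ) * (v - 1) ≥
      (k : ℤ) * (((k / v : ℕ) : ℤ) + (((k + v - 1) / v : ℕ) : ℤ) - 1) -
        (v : ℤ) * ((k / v : ℕ) : ℤ) * (((k + v - 1) / v : ℕ) : ℤ) :=
  stmt2_general v k lam hv A hA
end

section
/- If a C³₃(v,k,λ)-cube exists and k > 1, then λ·(v−1) ≤ k·(k−1) − 1. -/
open Finset

/-!
Fix a layer `x₀`. Weighting each cell `(y, z)` of that layer by the line sum `∑ x, A x y z`
counts `k` for the layer itself and `λ` for each of the other `v - 1` layers. A line sum
never exceeds `k`, and a line with sum exactly `k` would carry the whole `y`-layer and the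
whole `z`-layer through it, making the scalar product of that `y`-layer with any other one
vanish. So for `λ > 0` every line sum is at most `k - 1`, and the count gives
`λ (v - 1) + k ≤ (k - 1) k`.
-/

theorem eq_zero_of_sum_sum_eq_sum_apply {α β : Type*} [Fintype α] [Fintype β]
    {f : α → β → ℕ} {b₀ : β} (h : ∑ a, ∑ b, f a b = ∑ a, f a b₀) (a : α) {b : β}
    (hb : b ≠ b₀) : f a b = 0 := by
  classical
  have hrest : ∑ a, ∑ b ∈ univ.erase b₀, f a b = 0 := by
    simp_rw [← fun a => add_sum_erase univ (f a) (mem_univ b₀), sum_add_distrib] at h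
    omega
  exact sum_eq_zero_iff.mp (sum_eq_zero_iff.mp hrest a (mem_univ a)) b
    (mem_erase.mpr ⟨hb, mem_univ b⟩)

namespace IsCube

variable {v k lam : ℕ} {A : Fin v → Fin v → Fin v → ℕ}

theorem mul_self_apply (hA : IsCube v k lam A) (x y z : Fin v) :
    A x y z * A x y z = A x y z := by
  rcases Nat.le_one_iff_eq_zero_or_eq_one.mp (hA.1 x y z) with h | h <;> simp [h]

theorem sum_line_le (hA : IsCube v k lam A) (y z : Fin v) : ∑ x, A x y z ≤ k :=
  hA.2.2.1 y ▸ sum_le_sum fun _ _ => single_le_sum (fun _ _ => Nat.zero_le _) (mem_univ z)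

theorem sum_sum_line_mul_layer (hA : IsCube v k lam A) (x₀ : Fin v) :
    ∑ y, ∑ z, (∑ x, A x y z) * A x₀ y z = lam * (v - 1) + k := by
  simp_rw [sum_mul]
  rw [sum_congr rfl fun y _ => sum_comm, sum_comm, ← add_sum_erase _ _ (mem_univ x₀)]
  have hdiag : ∑ y, ∑ z, A x₀ y z * A x₀ y z = k := by
    simp_rw [hA.mul_self_apply]
    exact hA.2.1 x₀
  have hoff : ∀ x ∈ univ.erase x₀, ∑ y, ∑ z, A x y z * A x₀ y z = lam :=
    fun x hx => hA.2.2.2.2.1 x x₀ (ne_of_mem_erase hx)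
  rw [hdiag, sum_congr rfl hoff, sum_const, card_erase_of_mem (mem_univ x₀), card_univ,
    Fintype.card_fin, smul_eq_mul, add_comm, mul_comm]

theorem eq_zero_of_sum_line_eq_of_ne_right (hA : IsCube v k lam A) {y z : Fin v}
    (hfull : ∑ x, A x y z = k) (x : Fin v) {z' : Fin v} (hz : z' ≠ z) : A x y z' = 0 :=
  eq_zero_of_sum_sum_eq_sum_apply (f := fun x z => A x y z) (by rw [hA.2.2.1 y, hfull]) x hz

theorem eq_zero_of_sum_line_eq_of_ne_left (hA : IsCube v k lam A) {y z : Fin v}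
    (hfull : ∑ x, A x y z = k) (x : Fin v) {y' : Fin v} (hy : y' ≠ y) : A x y' z = 0 :=
  eq_zero_of_sum_sum_eq_sum_apply (f := fun x y => A x y z) (by rw [hA.2.2.2.1 z, hfull]) x hy

theorem lam_eq_zero_of_sum_line_eq (hA : IsCube v k lam A) {y z y' : Fin v}
    (hfull : ∑ x, A x y z = k) (hy : y' ≠ y) : lam = 0 := by
  rw [← hA.2.2.2.2.2.1 y y' hy.symm]
  refine sum_eq_zero fun x _ => sum_eq_zero fun z' _ => ?_
  rcases eq_or_ne z' z with rfl | hz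
  · rw [hA.eq_zero_of_sum_line_eq_of_ne_left hfull x hy, mul_zero]
  · rw [hA.eq_zero_of_sum_line_eq_of_ne_right hfull x hz, zero_mul]

theorem sum_line_lt (hA : IsCube v k lam A) (hv : 1 < v) (hlam : lam ≠ 0) (y z : Fin v) :
    ∑ x, A x y z < k := by
  obtain ⟨y', hy⟩ := Fintype.exists_ne_of_one_lt_card (by rwa [Fintype.card_fin]) y
  exact (hA.sum_line_le y z).lt_of_ne fun hfull => hlam (hA.lam_eq_zero_of_sum_line_eq hfull hy)

theorem lam_mul_add_le (hA : IsCube v k lam A) (hv : 1 < v) (hlam : lam ≠ 0) :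
    lam * (v - 1) + k ≤ (k - 1) * k := by
  let x₀ : Fin v := ⟨0, by omega⟩
  calc lam * (v - 1) + k = ∑ y, ∑ z, (∑ x, A x y z) * A x₀ y z :=
        (hA.sum_sum_line_mul_layer x₀).symm
    _ ≤ ∑ y, ∑ z, (k - 1) * A x₀ y z := by
        gcongr with y _ z _
        have := hA.sum_line_lt hv hlam y z
        omega
    _ = (k - 1) * k := by simp_rw [← mul_sum]; rw [hA.2.1 x₀]

end IsCube

theorem stmt3_general (v k lam : ℕ) (A : Fin v → Fin v → Fin v → ℕ)
    (hA : IsCube v k lam A) (hk : 1 < k) :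
    (lam : ℤ) * (v - 1) ≤ (k : ℤ) * ((k : ℤ) - 1) - 1 := by
  have hk' : (2 : ℤ) ≤ k := by exact_mod_cast hk
  rcases Nat.lt_or_ge 1 v with hv | hv
  · rcases eq_or_ne lam 0 with rfl | hlam
    · push_cast
      nlinarith
    · have hle := hA.lam_mul_add_le hv hlam
      zify [hv.le, hk.le] at hle
      nlinarith
  · have hv' : (v : ℤ) ≤ 1 := by exact_mod_cast hv
    nlinarith [Int.natCast_nonneg lam]

theorem stmt3 (v k lam : ℕ) (hv : 0 < v) (A : Fin v → Fin v → Fin v → ℕ)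
    (hA : IsCube v k lam A) (hk : 1 < k) :
    (lam : ℤ) * (v - 1) ≤ (k : ℤ) * ((k : ℤ) - 1) - 1 :=
  stmt3_general v k lam A hA hk
end

section
/- If a C³₃(v,k,λ)-cube exists with λ = k, then k = 0 or k = v². -/
open Finset

/-!
Two `{0,1}`-layers with `k` ones each and scalar product `k` have their ones in the same
places, so when `λ = k` all parallel layers coincide. Equality of the layers in two
directions makes the cube constant, with value `c ∈ {0, 1}`, and then `k = v² c`.
-/

theorem Finset.mul_eq_self_of_sum_mul_eq {ι : Type*} (s : Finset ι) (f g : ι → ℕ)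
    (hg : ∀ i ∈ s, g i ≤ 1) (h : ∑ i ∈ s, f i * g i = ∑ i ∈ s, f i) :
    ∀ i ∈ s, f i * g i = f i :=
  (Finset.sum_eq_sum_iff_of_le fun i hi => mul_le_of_le_one_right (Nat.zero_le _) (hg i hi)).mp h

theorem eq_of_sum_mul_eq_of_le_one {ι : Type*} [Fintype ι] (f g : ι → ℕ)
    (hf : ∀ i, f i ≤ 1) (hg : ∀ i, g i ≤ 1)
    (hfg : ∑ i, f i * g i = ∑ i, f i) (hgf : ∑ i, f i * g i = ∑ i, g i) : f = g := by
  funext i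
  have hf' := mul_eq_self_of_sum_mul_eq univ f g (fun j _ => hg j) hfg i (mem_univ i)
  have hg' := mul_eq_self_of_sum_mul_eq univ g f (fun j _ => hf j)
    (by simpa only [mul_comm] using hgf) i (mem_univ i)
  exact hf'.symm.trans ((mul_comm _ _).trans hg')

theorem eq_of_sum_sum_mul_eq_of_le_one {α β : Type*} [Fintype α] [Fintype β] {k : ℕ}
    (a b : α → β → ℕ) (ha : ∀ i j, a i j ≤ 1) (hb : ∀ i j, b i j ≤ 1)
    (ha_sum : ∑ i, ∑ j, a i j = k) (hb_sum : ∑ i, ∑ j, b i j = k)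
    (hab : ∑ i, ∑ j, a i j * b i j = k) : a = b := by
  have h := eq_of_sum_mul_eq_of_le_one (Function.uncurry a) (Function.uncurry b)
    (fun p => ha p.1 p.2) (fun p => hb p.1 p.2)
    (by simp only [Fintype.sum_prod_type, Function.uncurry_apply_pair, hab, ha_sum])
    (by simp only [Fintype.sum_prod_type, Function.uncurry_apply_pair, hab, hb_sum])
  exact Function.uncurry_injective h

namespace IsCube

variable {v k : ℕ} {A : Fin v → Fin v → Fin v → ℕ}

theorem layer_fst_eq (hA : IsCube v k k A) (x₁ x₂ : Fin v) : A x₁ = A x₂ := by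
  obtain ⟨h01, hx, -, -, hxx, -, -⟩ := hA
  rcases eq_or_ne x₁ x₂ with h | h
  · rw [h]
  · exact eq_of_sum_sum_mul_eq_of_le_one _ _ (h01 x₁) (h01 x₂) (hx x₁) (hx x₂) (hxx x₁ x₂ h)

theorem layer_snd_eq (hA : IsCube v k k A) (x y₁ y₂ z : Fin v) :
    A x y₁ z = A x y₂ z := by
  obtain ⟨h01, -, hy, -, -, hyy, -⟩ := hA
  rcases eq_or_ne y₁ y₂ with h | h
  · rw [h]
  · exact congrFun₂ (eq_of_sum_sum_mul_eq_of_le_one (fun x z => A x y₁ z) (fun x z => A x y₂ z)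
      (fun i j => h01 _ _ _) (fun i j => h01 _ _ _) (hy y₁) (hy y₂) (hyy y₁ y₂ h)) x z

end IsCube

theorem stmt4 (v k : ℕ) (hv : 0 < v) (A : Fin v → Fin v → Fin v → ℕ)
    (hA : IsCube v k k A) :
    k = 0 ∨ k = v ^ 2 := by
  set o : Fin v := ⟨0, hv⟩
  have hconst : ∀ x y, A x y o = A o o o := fun x y => by
    rw [hA.layer_fst_eq x o, hA.layer_snd_eq o y o o]
  have hk : k = v ^ 2 * A o o o := by
    simp only [← hA.2.2.2.1 o, hconst, sum_const, card_univ, Fintype.card_fin, smul_eq_mul]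
    ring
  rcases Nat.le_one_iff_eq_zero_or_eq_one.mp (hA.1 o o o) with h | h
  · left; simp [hk, h]
  · right; simp [hk, h]
end

section
/- Let G be a finite group of order v and D ⊆ G² a (v,k,λ) difference set of propriety 3. Then the development dev D = {(x·g, y·g, g) : (x,y) ∈ D, g ∈ G} is the support of a C³₃(v,k,λ)-cube, i.e., the array A(a,b,c) = [(a,b,c) ∈ dev D] satisfies: every layer contains exactly k ones and any two distinct parallel layers have scalar product λ. -/
open Finset

variable {G : Type*} [Group G] [Fintype G] [DecidableEq G]

/-- A (v,k,lam) difference set of propriety 3 in a group G of order v: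
a k-subset D of G x G such that for every nonidentity g, condition (1) on left
differences of both coordinates, and conditions (2),(3) on right differences of
one coordinate with the other coordinate equal, each have exactly lam solutions. -/
def IsPropDS3 (G : Type*) [Group G] [Fintype G] [DecidableEq G]
    (v k lam : ℕ) (D : Finset (G × G)) : Prop :=
  Fintype.card G = v ∧ D.card = k ∧
  ∀ g : G, g ≠ 1 →
    (((D ×ˢ D).filter fun p => p.1.1⁻¹ * p.2.1 = g ∧ p.1.2⁻¹ * p.2.2 = g).card = lam ∧
     ((D ×ˢ D).filter fun p => p.1.1 * p.2.1⁻¹ = g ∧ p.1.2 = p.2.2).card = lam ∧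
     ((D ×ˢ D).filter fun p => p.1.1 = p.2.1 ∧ p.1.2 * p.2.2⁻¹ = g).card = lam)

/-- The development of D: all triples (x*g, y*g, g) for (x,y) in D, g in G. -/
def dev (D : Finset (G × G)) : Finset (G × G × G) :=
  (D ×ˢ (Finset.univ : Finset G)).image fun p => (p.1.1 * p.2, p.1.2 * p.2, p.2)


/-! A triple (a, b, c) lies in `dev D` iff (a c⁻¹, b c⁻¹) ∈ D. Once one coordinate of the cube is
fixed, (a c⁻¹, b c⁻¹) runs bijectively over G × G as the other two coordinates do, so every layer
has |D| = k ones. In two parallel layers the second point is a fixed translate of the first: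
(g⁻¹ x, y), (x, g⁻¹ y) or (x g, y g), with g the quotient of the two layer indices. So their scalar
product counts the p ∈ D whose translate is again in D, i.e. the pairs of propriety condition
(2), (3) or (1). -/

omit [DecidableEq G] in
lemma sum_mul_inv_left (a : G) {M : Type*} [AddCommMonoid M] (φ : G → M) :
    ∑ c, φ (a * c⁻¹) = ∑ x, φ x :=
  ((Equiv.inv G).trans (Equiv.mulLeft a)).sum_comp φ

omit [DecidableEq G] in
lemma sum_sum_mul_inv_fst (a : G) {M : Type*} [AddCommMonoid M] (φ : G × G → M) :
    ∑ b, ∑ c, φ (a * c⁻¹, b * c⁻¹) = ∑ p, φ p := by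
  calc ∑ b, ∑ c, φ (a * c⁻¹, b * c⁻¹)
      = ∑ c, ∑ b, φ (a * c⁻¹, b * c⁻¹) := Finset.sum_comm
    _ = ∑ c, ∑ y, φ (a * c⁻¹, y) :=
        Finset.sum_congr rfl fun c _ => Equiv.sum_comp (Equiv.mulRight c⁻¹) fun y => φ (a * c⁻¹, y)
    _ = ∑ x, ∑ y, φ (x, y) := sum_mul_inv_left a fun x => ∑ y, φ (x, y)
    _ = ∑ p, φ p := (Fintype.sum_prod_type' fun x y => φ (x, y)).symm

omit [DecidableEq G] in
lemma sum_sum_mul_inv_snd (b : G) {M : Type*} [AddCommMonoid M] (φ : G × G → M) :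
    ∑ a, ∑ c, φ (a * c⁻¹, b * c⁻¹) = ∑ p, φ p :=
  (sum_sum_mul_inv_fst b fun p => φ p.swap).trans ((Equiv.prodComm G G).sum_comp φ)

omit [DecidableEq G] in
lemma sum_sum_mul_inv_thd (c : G) {M : Type*} [AddCommMonoid M] (φ : G × G → M) :
    ∑ a, ∑ b, φ (a * c⁻¹, b * c⁻¹) = ∑ p, φ p := by
  rw [← Fintype.sum_prod_type' fun a b => φ (a * c⁻¹, b * c⁻¹)]
  exact ((Equiv.mulRight c⁻¹).prodCongr (Equiv.mulRight c⁻¹)).sum_comp φ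

lemma card_filter_snd_eq_apply_fst {α : Type*} [DecidableEq α] (D : Finset α) (f : α → α) :
    ((D ×ˢ D).filter fun q => q.2 = f q.1).card = (D.filter fun p => f p ∈ D).card :=
  Finset.card_nbij' Prod.fst (fun p => (p, f p))
    (fun q hq => by
      simp only [coe_filter, mem_product, Set.mem_ofPred_eq] at hq ⊢
      exact ⟨hq.1.1, hq.2 ▸ hq.1.2⟩)
    (fun p hp => by simp_all)
    (fun q hq => by simp_all [Prod.ext_iff])
    (fun _ _ => rfl)

lemma sum_ite_mem_mul_ite_mem {α : Type*} [Fintype α] [DecidableEq α] (D : Finset α)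
    (f : α → α) :
    ∑ p, (if p ∈ D then 1 else 0) * (if f p ∈ D then 1 else 0) =
      (D.filter fun p => f p ∈ D).card := by
  simp only [ite_zero_mul_ite_zero, one_mul, ite_and, Fintype.sum_ite_mem, Finset.sum_boole,
    Nat.cast_id]

lemma mem_dev {D : Finset (G × G)} {a b c : G} :
    (a, b, c) ∈ dev D ↔ (a * c⁻¹, b * c⁻¹) ∈ D := by
  simp only [dev, Finset.mem_image, Finset.mem_product, Finset.mem_univ, and_true,
    Prod.exists, Prod.mk.injEq]
  constructor
  · rintro ⟨x, y, g, hxy, rfl, rfl, rfl⟩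
    simpa using hxy
  · exact fun h => ⟨a * c⁻¹, b * c⁻¹, c, h, by group, by group, rfl⟩

section

variable {v k lam : ℕ} {D : Finset (G × G)}

namespace IsPropDS3

lemma card_filter_mul_diag_mem (hD : IsPropDS3 G v k lam D) {g : G} (hg : g ≠ 1) :
    (D.filter fun p => p * (g, g) ∈ D).card = lam := by
  rw [← card_filter_snd_eq_apply_fst, ← (hD.2.2 g hg).1]
  congr! 2 with q
  simp [Prod.ext_iff, inv_mul_eq_iff_eq_mul]

lemma card_filter_inv_mul_fst_mem (hD : IsPropDS3 G v k lam D) {g : G} (hg : g ≠ 1) :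
    (D.filter fun p => (g⁻¹ * p.1, p.2) ∈ D).card = lam := by
  rw [← card_filter_snd_eq_apply_fst, ← (hD.2.2 g hg).2.1]
  congr! 2 with q
  simp only [Prod.ext_iff, eq_inv_mul_iff_mul_eq, mul_inv_eq_iff_eq_mul]
  exact and_congr eq_comm eq_comm

lemma card_filter_inv_mul_snd_mem (hD : IsPropDS3 G v k lam D) {g : G} (hg : g ≠ 1) :
    (D.filter fun p => (p.1, g⁻¹ * p.2) ∈ D).card = lam := by
  rw [← card_filter_snd_eq_apply_fst, ← (hD.2.2 g hg).2.2]
  congr! 2 with q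
  simp only [Prod.ext_iff, eq_inv_mul_iff_mul_eq, mul_inv_eq_iff_eq_mul]
  exact and_congr eq_comm eq_comm

end IsPropDS3

variable (D)

lemma sum_sum_ite_mem_dev_fst (a : G) :
    ∑ b, ∑ c, (if (a, b, c) ∈ dev D then 1 else 0) = D.card := by
  simp only [mem_dev]
  exact (sum_sum_mul_inv_fst a fun p => if p ∈ D then 1 else 0).trans (by simp)

lemma sum_sum_ite_mem_dev_snd (b : G) :
    ∑ a, ∑ c, (if (a, b, c) ∈ dev D then 1 else 0) = D.card := by
  simp only [mem_dev]
  exact (sum_sum_mul_inv_snd b fun p => if p ∈ D then 1 else 0).trans (by simp)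

lemma sum_sum_ite_mem_dev_thd (c : G) :
    ∑ a, ∑ b, (if (a, b, c) ∈ dev D then 1 else 0) = D.card := by
  simp only [mem_dev]
  exact (sum_sum_mul_inv_thd c fun p => if p ∈ D then 1 else 0).trans (by simp)

lemma sum_sum_ite_mem_dev_mul_fst (a₁ a₂ : G) :
    ∑ b, ∑ c, (if (a₁, b, c) ∈ dev D then 1 else 0) * (if (a₂, b, c) ∈ dev D then 1 else 0) =
      (D.filter fun p => ((a₁ * a₂⁻¹)⁻¹ * p.1, p.2) ∈ D).card := by
  rw [← sum_ite_mem_mul_ite_mem, ← sum_sum_mul_inv_fst a₁]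
  simp [mem_dev, mul_assoc]

lemma sum_sum_ite_mem_dev_mul_snd (b₁ b₂ : G) :
    ∑ a, ∑ c, (if (a, b₁, c) ∈ dev D then 1 else 0) * (if (a, b₂, c) ∈ dev D then 1 else 0) =
      (D.filter fun p => (p.1, (b₁ * b₂⁻¹)⁻¹ * p.2) ∈ D).card := by
  rw [← sum_ite_mem_mul_ite_mem, ← sum_sum_mul_inv_snd b₁]
  simp [mem_dev, mul_assoc]

lemma sum_sum_ite_mem_dev_mul_thd (c₁ c₂ : G) :
    ∑ a, ∑ b, (if (a, b, c₁) ∈ dev D then 1 else 0) * (if (a, b, c₂) ∈ dev D then 1 else 0) =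
      (D.filter fun p => p * (c₁ * c₂⁻¹, c₁ * c₂⁻¹) ∈ D).card := by
  rw [← sum_ite_mem_mul_ite_mem, ← sum_sum_mul_inv_thd c₁]
  simp [mem_dev, mul_assoc]

end

theorem stmt9 (v k lam : ℕ) (D : Finset (G × G))
    (hD : IsPropDS3 G v k lam D) :
    let A : G → G → G → ℕ := fun a b c => if (a, b, c) ∈ dev D then 1 else 0
    (∀ a : G, ∑ b : G, ∑ c : G, A a b c = k) ∧
    (∀ b : G, ∑ a : G, ∑ c : G, A a b c = k) ∧
    (∀ c : G, ∑ a : G, ∑ b : G, A a b c = k) ∧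
    (∀ a₁ a₂ : G, a₁ ≠ a₂ → ∑ b : G, ∑ c : G, A a₁ b c * A a₂ b c = lam) ∧
    (∀ b₁ b₂ : G, b₁ ≠ b₂ → ∑ a : G, ∑ c : G, A a b₁ c * A a b₂ c = lam) ∧
    (∀ c₁ c₂ : G, c₁ ≠ c₂ → ∑ a : G, ∑ b : G, A a b c₁ * A a b c₂ = lam) := by
  have hk : D.card = k := hD.2.1
  exact ⟨fun a => (sum_sum_ite_mem_dev_fst D a).trans hk,
    fun b => (sum_sum_ite_mem_dev_snd D b).trans hk,
    fun c => (sum_sum_ite_mem_dev_thd D c).trans hk,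
    fun a₁ a₂ ha => (sum_sum_ite_mem_dev_mul_fst D a₁ a₂).trans
      (hD.card_filter_inv_mul_fst_mem (mul_inv_eq_one.not.mpr ha)),
    fun b₁ b₂ hb => (sum_sum_ite_mem_dev_mul_snd D b₁ b₂).trans
      (hD.card_filter_inv_mul_snd_mem (mul_inv_eq_one.not.mpr hb)),
    fun c₁ c₂ hc => (sum_sum_ite_mem_dev_mul_thd D c₁ c₂).trans
      (hD.card_filter_mul_diag_mem (mul_inv_eq_one.not.mpr hc))⟩
end

section
/- Let D ⊆ G² be a difference set of propriety 3 and φ an automorphism of G whose only fixed point is the identity. If φ is a multiplier of D, i.e., φ(D) = (a,b)·D for some (a,b) ∈ G², then there exists (g,h) ∈ G² such that φ((g,h)·D) = (g,h)·D. -/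
/-!
Translating by `(g, h)` and then applying `φ` is the same as applying `φ` and then translating by
`(φ g, φ h)`, so by the multiplier property `φ ((g, h) • D) = (φ g * a, φ h * b) • D`. It remains to
solve `φ g * a = g` (and likewise for `b`): for a fixed-point-free `φ` the map `g ↦ g / φ g` is
injective, hence bijective on a finite group, and `g = k⁻¹` with `k / φ k = a⁻¹` is a solution.
-/

open Finset

theorem MonoidHom.FixedPointFree.exists_apply_mul_eq_self {F G : Type*} [Group G] [Finite G]
    [FunLike F G G] [MonoidHomClass F G G] {φ : F} (hφ : MonoidHom.FixedPointFree φ) (a : G) :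
    ∃ g : G, φ g * a = g := by
  obtain ⟨k, hk⟩ := hφ.commutatorMap_surjective a⁻¹
  refine ⟨k⁻¹, ?_⟩
  rw [map_inv, ← inv_inv a, ← hk, MonoidHom.commutatorMap_apply, div_eq_mul_inv, mul_inv_rev,
    inv_inv, inv_mul_cancel_left]

section Translates

variable {F G H : Type*}

theorem Finset.image_prodMap_image_mul [Mul G] [Mul H] [DecidableEq G] [DecidableEq H]
    [FunLike F G H] [MulHomClass F G H] (φ : F) (D : Finset (G × G)) (g h : G) :
    (D.image fun p => (g * p.1, h * p.2)).image (fun p => (φ p.1, φ p.2)) =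
      (D.image fun p => (φ p.1, φ p.2)).image fun p => (φ g * p.1, φ h * p.2) := by
  simp only [image_image, Function.comp_def, map_mul]

theorem Finset.image_mul_image_mul [Semigroup G] [DecidableEq G] (D : Finset (G × G))
    (a b c d : G) :
    (D.image fun p => (a * p.1, b * p.2)).image (fun p => (c * p.1, d * p.2)) =
      D.image fun p => (c * a * p.1, d * b * p.2) := by
  simp only [image_image, Function.comp_def, mul_assoc]

end Translates

theorem stmt11 {G : Type*} [Group G] [Fintype G] [DecidableEq G]
    (D : Finset (G × G)) (φ : G ≃* G)
    (hfix : ∀ x : G, φ x = x → x = 1)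
    (a b : G)
    (hmult : D.image (fun p => (φ p.1, φ p.2)) = D.image fun p => (a * p.1, b * p.2)) :
    ∃ g h : G,
      (D.image fun p => (g * p.1, h * p.2)).image (fun p => (φ p.1, φ p.2)) =
        D.image fun p => (g * p.1, h * p.2) := by
  obtain ⟨g, hg⟩ := MonoidHom.FixedPointFree.exists_apply_mul_eq_self hfix a
  obtain ⟨h, hh⟩ := MonoidHom.FixedPointFree.exists_apply_mul_eq_self hfix b
  refine ⟨g, h, ?_⟩
  rw [image_prodMap_image_mul, hmult, image_mul_image_mul, hg, hh]
end

section
/- If A is the incidence matrix of a symmetric (v,k,λ) design and L is a Latin square of order v, then B(x,y,z) = A(x, L(y,z)) is a C³₃(v, v·k, v·λ)-cube. -/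
/-!
The rows and columns of a Latin square are permutations, so with one coordinate of the cube
`A x (L y z)` fixed besides `x`, the remaining sum is a row sum or row scalar product of `A`.
Two distinct `y`- (or `z`-) layers read, at each value of the third coordinate, two distinct
columns of `A`. Summing over the last free coordinate gives the factor `v`.
-/

open Finset

/-- An incidence matrix of a symmetric `(v,k,λ)` design: a `v×v` `{0,1}`-matrix
with `k` ones in every row and column, such that any two distinct rows and any
two distinct columns have scalar product `lam`. -/
def IsIncidenceMatrix (v k lam : ℕ) (A : Fin v → Fin v → ℕ) : Prop :=
  (∀ i j, A i j ≤ 1) ∧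
  (∀ i, ∑ j, A i j = k) ∧
  (∀ j, ∑ i, A i j = k) ∧
  (∀ i₁ i₂, i₁ ≠ i₂ → ∑ j, A i₁ j * A i₂ j = lam) ∧
  (∀ j₁ j₂, j₁ ≠ j₂ → ∑ i, A i j₁ * A i j₂ = lam)

/-- A Latin square of order : each symbol occurs exactly once in every row
and every column. -/
def IsLatinSquare (v : ℕ) (L : Fin v → Fin v → Fin v) : Prop :=
  (∀ x, Function.Bijective (L x)) ∧ (∀ y, Function.Bijective (fun x => L x y))

namespace IsLatinSquare

variable {v : ℕ} {L : Fin v → Fin v → Fin v}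

theorem sum_row_comp {M : Type*} [AddCommMonoid M] (hL : IsLatinSquare v L)
    (f : Fin v → M) (y : Fin v) : ∑ z, f (L y z) = ∑ s, f s :=
  Fintype.sum_bijective (L y) (hL.1 y) _ _ fun _ => rfl

theorem sum_col_comp {M : Type*} [AddCommMonoid M] (hL : IsLatinSquare v L)
    (f : Fin v → M) (z : Fin v) : ∑ y, f (L y z) = ∑ s, f s :=
  Fintype.sum_bijective (fun y => L y z) (hL.2 z) _ _ fun _ => rfl

theorem row_ne (hL : IsLatinSquare v L) (y : Fin v) {z₁ z₂ : Fin v} (h : z₁ ≠ z₂) :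
    L y z₁ ≠ L y z₂ :=
  (hL.1 y).1.ne h

theorem col_ne (hL : IsLatinSquare v L) (z : Fin v) {y₁ y₂ : Fin v} (h : y₁ ≠ y₂) :
    L y₁ z ≠ L y₂ z :=
  (hL.2 z).1.ne h

end IsLatinSquare

theorem Fin.sum_sum_eq_mul_of_forall {R ι : Type*} [NonAssocSemiring R] [Fintype ι] {v : ℕ}
    (f : Fin v → ι → R) {c : R} (h : ∀ y, ∑ z, f y z = c) : ∑ y, ∑ z, f y z = v * c := by
  simp [h]

theorem stmt16 (v k lam : ℕ) (A : Fin v → Fin v → ℕ)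
    (hA : IsIncidenceMatrix v k lam A)
    (L : Fin v → Fin v → Fin v) (hL : IsLatinSquare v L) :
    IsCube v (v * k) (v * lam) (fun x y z => A x (L y z)) := by
  obtain ⟨h01, hrow, -, hrows, hcols⟩ := hA
  refine ⟨fun x y z => h01 _ _, fun x => ?_, fun y => ?_, fun z => ?_,
    fun x₁ x₂ hx => ?_, fun y₁ y₂ hy => ?_, fun z₁ z₂ hz => ?_⟩
  · exact Fin.sum_sum_eq_mul_of_forall _ fun y => (hL.sum_row_comp (A x) y).trans (hrow x)
  · exact Fin.sum_sum_eq_mul_of_forall _ fun x => (hL.sum_row_comp (A x) y).trans (hrow x)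
  · exact Fin.sum_sum_eq_mul_of_forall _ fun x => (hL.sum_col_comp (A x) z).trans (hrow x)
  · exact Fin.sum_sum_eq_mul_of_forall _ fun y =>
      (hL.sum_row_comp (fun s => A x₁ s * A x₂ s) y).trans (hrows x₁ x₂ hx)
  · rw [Finset.sum_comm]
    exact Fin.sum_sum_eq_mul_of_forall _ fun z => hcols _ _ (hL.col_ne z hy)
  · rw [Finset.sum_comm]
    exact Fin.sum_sum_eq_mul_of_forall _ fun y => hcols _ _ (hL.row_ne y hz)
end

section
/- Let A be a 1-diagonal incidence matrix of a symmetric (v,k,λ) design (A(x,x)=1 for all x). Then B(x,y,z) = A(x,y)+A(y,z)+A(x,z) mod 2 is a C³₃(v, K, Λ)-cube with K = k(3v+4λ−2k) − 4vλ and Λ = k(v−4λ+2) + 2λ(2λ−1). -/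
open Finset

/-!
Pass to signs: put `E i j = (-1) ^ A i j`, so that `(-1) ^ B x y z = E x y * E y z * E x z`.
The design conditions say that `E` has row and column sums `v - 2k` and that distinct rows
(and distinct columns) of `E` have scalar product `w = v - 4k + 4λ`. Summing a layer of the sign
cube over its inner index leaves one such scalar product, so every layer sums to
`(v - 2k) w - (v - w)`, the correction coming from `E x x = -1`. For two parallel layers the
shared factor squares to `1` and the sum splits into two scalar products, giving `w²`.
A `{0,1}`-layer whose signs sum to `v² - 2K` has `K` ones, and two such layers whose signs have
scalar product `v² - 4K + 4Λ` share `Λ` ones; `k (k - 1) = λ (v - 1)` puts `K` and `Λ` in the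
stated form.
-/

section Signs

variable {ι α β : Type*} [Fintype ι] [Fintype α] [Fintype β]

lemma neg_one_pow_eq_one_sub_two_mul {a : ℕ} (ha : a ≤ 1) : (-1 : ℤ) ^ a = 1 - 2 * a := by
  interval_cases a <;> norm_num

lemma neg_one_pow_mul_self {M : Type*} [Monoid M] [HasDistribNeg M] (a : ℕ) :
    (-1 : M) ^ a * (-1) ^ a = 1 := by
  rw [← pow_add, ← two_mul, pow_mul, neg_one_sq, one_pow]

lemma sum_neg_one_pow_eq {a : ι → ℕ} (ha : ∀ i, a i ≤ 1) :
    ∑ i, (-1 : ℤ) ^ a i = Fintype.card ι - 2 * ((∑ i, a i : ℕ) : ℤ) := by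
  simp only [fun i => neg_one_pow_eq_one_sub_two_mul (ha i), sum_sub_distrib, ← mul_sum]
  simp

lemma sum_neg_one_pow_mul_neg_one_pow_eq {a b : ι → ℕ} (ha : ∀ i, a i ≤ 1) (hb : ∀ i, b i ≤ 1) :
    ∑ i, (-1 : ℤ) ^ a i * (-1) ^ b i = Fintype.card ι - 2 * ((∑ i, a i : ℕ) : ℤ)
      - 2 * ((∑ i, b i : ℕ) : ℤ) + 4 * ((∑ i, a i * b i : ℕ) : ℤ) := by
  have expand : ∀ i,
      (-1 : ℤ) ^ a i * (-1) ^ b i = 1 - 2 * a i - 2 * b i + 4 * (a i * b i : ℕ) := by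
    intro i
    rw [neg_one_pow_eq_one_sub_two_mul (ha i), neg_one_pow_eq_one_sub_two_mul (hb i)]
    push_cast; ring
  simp only [expand, sum_add_distrib, sum_sub_distrib, ← mul_sum]
  simp

lemma sum_sum_eq_of_sum_sum_neg_one_pow {f : α → β → ℕ} (hf : ∀ a b, f a b ≤ 1) {K : ℕ}
    (h : ∑ a, ∑ b, (-1 : ℤ) ^ f a b = Fintype.card α * Fintype.card β - 2 * K) :
    ∑ a, ∑ b, f a b = K := by
  rw [← Fintype.sum_prod_type'] at h ⊢
  rw [sum_neg_one_pow_eq (fun p : α × β => hf p.1 p.2), Fintype.card_prod,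
    Nat.cast_mul] at h
  exact_mod_cast (by linarith : ((∑ p : α × β, f p.1 p.2 : ℕ) : ℤ) = K)

lemma sum_sum_mul_eq_of_sum_sum_neg_one_pow {f g : α → β → ℕ} (hf : ∀ a b, f a b ≤ 1)
    (hg : ∀ a b, g a b ≤ 1) {K Lam : ℕ} (hfK : ∑ a, ∑ b, f a b = K) (hgK : ∑ a, ∑ b, g a b = K)
    (h : ∑ a, ∑ b, (-1 : ℤ) ^ f a b * (-1) ^ g a b
      = Fintype.card α * Fintype.card β - 4 * K + 4 * Lam) :
    ∑ a, ∑ b, f a b * g a b = Lam := by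
  rw [← Fintype.sum_prod_type'] at h hfK hgK ⊢
  rw [sum_neg_one_pow_mul_neg_one_pow_eq
    (fun p : α × β => hf p.1 p.2) (fun p => hg p.1 p.2), hfK, hgK, Fintype.card_prod,
    Nat.cast_mul] at h
  exact_mod_cast (by linarith : ((∑ p : α × β, f p.1 p.2 * g p.1 p.2 : ℕ) : ℤ) = Lam)

end Signs

section TriangleProd

variable {R ι : Type*} [CommRing R] [Fintype ι] {E : ι → ι → R}

def triangleProd (E : ι → ι → R) (x y z : ι) : R := E x y * E y z * E x z

lemma sum_sum_triangleProd_mul_left (hsq : ∀ i j, E i j * E i j = 1) (x₁ x₂ : ι) :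
    ∑ y, ∑ z, triangleProd E x₁ y z * triangleProd E x₂ y z = (∑ y, E x₁ y * E x₂ y) ^ 2 := by
  have regroup : ∀ y z, triangleProd E x₁ y z * triangleProd E x₂ y z
      = (E x₁ y * E x₂ y) * (E x₁ z * E x₂ z) := by
    intro y z
    rw [triangleProd, triangleProd]
    linear_combination (E x₁ y * E x₂ y * (E x₁ z * E x₂ z)) * hsq y z
  simp only [regroup, ← mul_sum, ← sum_mul, sq]

lemma sum_sum_triangleProd_mul_middle (hsq : ∀ i j, E i j * E i j = 1) (y₁ y₂ : ι) :
    ∑ x, ∑ z, triangleProd E x y₁ z * triangleProd E x y₂ z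
      = (∑ x, E x y₁ * E x y₂) * ∑ z, E y₁ z * E y₂ z := by
  have regroup : ∀ x z, triangleProd E x y₁ z * triangleProd E x y₂ z
      = (E x y₁ * E x y₂) * (E y₁ z * E y₂ z) := by
    intro x z
    rw [triangleProd, triangleProd]
    linear_combination (E x y₁ * E x y₂ * (E y₁ z * E y₂ z)) * hsq x z
  simp only [regroup, ← mul_sum, ← sum_mul]

lemma sum_sum_triangleProd_mul_right (hsq : ∀ i j, E i j * E i j = 1) (z₁ z₂ : ι) :
    ∑ x, ∑ y, triangleProd E x y z₁ * triangleProd E x y z₂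
      = (∑ x, E x z₁ * E x z₂) * ∑ y, E y z₁ * E y z₂ := by
  have regroup : ∀ x y, triangleProd E x y z₁ * triangleProd E x y z₂
      = (E x z₁ * E x z₂) * (E y z₁ * E y z₂) := by
    intro x y
    rw [triangleProd, triangleProd]
    linear_combination (E x z₁ * E x z₂ * (E y z₁ * E y z₂)) * hsq x y
  simp only [regroup, ← mul_sum, ← sum_mul]

variable [DecidableEq ι] {n w : R}

lemma sum_mul_ite_eq (f : ι → R) (x : ι) (a b : R) :
    ∑ y, f y * (if y = x then a else b) = (∑ y, f y) * b + f x * (a - b) := by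
  have split : ∀ y,
      f y * (if y = x then a else b) = f y * b + if y = x then f y * (a - b) else 0 := by
    intro y; split_ifs <;> ring
  simp only [split, sum_add_distrib, ← sum_mul, sum_ite_eq', mem_univ, if_true]

lemma sum_mul_sum_eq_of_gram (hG : ∀ i₁ i₂, ∑ j, E i₁ j * E i₂ j = if i₁ = i₂ then n else w)
    {s : R} (hcol : ∀ j, ∑ i, E i j = s) (i₀ : ι) :
    s * ∑ j, E i₀ j = Fintype.card ι * w + (n - w) := by
  calc s * ∑ j, E i₀ j = ∑ i, ∑ j, E i j * E i₀ j := by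
        rw [sum_comm, mul_sum]
        exact sum_congr rfl fun j _ => by rw [← hcol j, sum_mul]
    _ = ∑ i, 1 * if i = i₀ then n else w := by simp only [hG, one_mul]
    _ = _ := by rw [sum_mul_ite_eq]; simp

lemma sum_sum_triangleProd_left (hG : ∀ i₁ i₂, ∑ j, E i₁ j * E i₂ j = if i₁ = i₂ then n else w)
    (x : ι) : ∑ y, ∑ z, triangleProd E x y z = (∑ y, E x y) * w + E x x * (n - w) := by
  simp only [triangleProd, mul_assoc, ← mul_sum, hG]
  exact sum_mul_ite_eq _ _ _ _

lemma sum_sum_triangleProd_middle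
    (hG : ∀ i₁ i₂, ∑ j, E i₁ j * E i₂ j = if i₁ = i₂ then n else w) (y : ι) :
    ∑ x, ∑ z, triangleProd E x y z = (∑ x, E x y) * w + E y y * (n - w) := by
  have regroup : ∀ x z, triangleProd E x y z = E x y * (E x z * E y z) := by
    intro x z; simp only [triangleProd]; ring
  simp only [regroup, ← mul_sum, hG]
  exact sum_mul_ite_eq _ _ _ _

lemma sum_sum_triangleProd_right
    (hG : ∀ j₁ j₂, ∑ i, E i j₁ * E i j₂ = if j₁ = j₂ then n else w) (z : ι) :
    ∑ x, ∑ y, triangleProd E x y z = (∑ y, E y z) * w + E z z * (n - w) := by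
  have regroup : ∀ x y, triangleProd E x y z = E y z * (E x y * E x z) := by
    intro x y; simp only [triangleProd]; ring
  rw [sum_comm]
  simp only [regroup, ← mul_sum, hG]
  exact sum_mul_ite_eq _ _ _ _

end TriangleProd

namespace IsIncidenceMatrix

variable {v k lam : ℕ} {A : Fin v → Fin v → ℕ}

lemma transpose (hA : IsIncidenceMatrix v k lam A) :
    IsIncidenceMatrix v k lam (fun i j => A j i) :=
  ⟨fun i j => hA.1 j i, hA.2.2.1, hA.2.1, hA.2.2.2.2, hA.2.2.2.1⟩

lemma sum_neg_one_pow (hA : IsIncidenceMatrix v k lam A) (i : Fin v) :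
    ∑ j, (-1 : ℤ) ^ A i j = v - 2 * k := by
  rw [sum_neg_one_pow_eq (hA.1 i), hA.2.1 i, Fintype.card_fin]

lemma sum_neg_one_pow_mul (hA : IsIncidenceMatrix v k lam A) (i₁ i₂ : Fin v) :
    ∑ j, (-1 : ℤ) ^ A i₁ j * (-1) ^ A i₂ j
      = if i₁ = i₂ then (v : ℤ) else v - 4 * k + 4 * lam := by
  split_ifs with h
  · subst h; simp [neg_one_pow_mul_self]
  · rw [sum_neg_one_pow_mul_neg_one_pow_eq (hA.1 i₁) (hA.1 i₂), hA.2.1, hA.2.1,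
      hA.2.2.2.1 i₁ i₂ h, Fintype.card_fin]
    ring

lemma k_mul_k_sub_one_eq (hA : IsIncidenceMatrix v k lam A) (hv : 0 < v) :
    (k : ℤ) * (k - 1) = lam * (v - 1) := by
  have h := sum_mul_sum_eq_of_gram hA.sum_neg_one_pow_mul hA.transpose.sum_neg_one_pow ⟨0, hv⟩
  rw [hA.sum_neg_one_pow, Fintype.card_fin] at h
  linarith

end IsIncidenceMatrix

lemma isCube_of_sum_sum_neg_one_pow {v K Lam : ℕ} {B : Fin v → Fin v → Fin v → ℕ}
    (hB : ∀ x y z, B x y z ≤ 1)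
    (h₁ : ∀ x, ∑ y, ∑ z, (-1 : ℤ) ^ B x y z = v ^ 2 - 2 * K)
    (h₂ : ∀ y, ∑ x, ∑ z, (-1 : ℤ) ^ B x y z = v ^ 2 - 2 * K)
    (h₃ : ∀ z, ∑ x, ∑ y, (-1 : ℤ) ^ B x y z = v ^ 2 - 2 * K)
    (p₁ : ∀ x₁ x₂, x₁ ≠ x₂ →
      ∑ y, ∑ z, (-1 : ℤ) ^ B x₁ y z * (-1) ^ B x₂ y z = v ^ 2 - 4 * K + 4 * Lam)
    (p₂ : ∀ y₁ y₂, y₁ ≠ y₂ →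
      ∑ x, ∑ z, (-1 : ℤ) ^ B x y₁ z * (-1) ^ B x y₂ z = v ^ 2 - 4 * K + 4 * Lam)
    (p₃ : ∀ z₁ z₂, z₁ ≠ z₂ →
      ∑ x, ∑ y, (-1 : ℤ) ^ B x y z₁ * (-1) ^ B x y z₂ = v ^ 2 - 4 * K + 4 * Lam) :
    IsCube v K Lam B := by
  have card_sq : (Fintype.card (Fin v) : ℤ) * Fintype.card (Fin v) = v ^ 2 := by
    simp [sq]
  have layer {f : Fin v → Fin v → ℕ} (hf : ∀ a b, f a b ≤ 1)
      (h : ∑ a, ∑ b, (-1 : ℤ) ^ f a b = v ^ 2 - 2 * K) : ∑ a, ∑ b, f a b = K :=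
    sum_sum_eq_of_sum_sum_neg_one_pow hf (by rw [h, card_sq])
  have inner {f g : Fin v → Fin v → ℕ} (hf : ∀ a b, f a b ≤ 1) (hg : ∀ a b, g a b ≤ 1)
      (hfK : ∑ a, ∑ b, (-1 : ℤ) ^ f a b = v ^ 2 - 2 * K)
      (hgK : ∑ a, ∑ b, (-1 : ℤ) ^ g a b = v ^ 2 - 2 * K)
      (h : ∑ a, ∑ b, (-1 : ℤ) ^ f a b * (-1) ^ g a b = v ^ 2 - 4 * K + 4 * Lam) :
      ∑ a, ∑ b, f a b * g a b = Lam :=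
    sum_sum_mul_eq_of_sum_sum_neg_one_pow hf hg (layer hf hfK) (layer hg hgK)
      (by rw [h, card_sq])
  exact ⟨hB, fun x => layer (hB x) (h₁ x), fun y => layer (fun x z => hB x y z) (h₂ y),
    fun z => layer (fun x y => hB x y z) (h₃ z),
    fun x₁ x₂ hx => inner (hB x₁) (hB x₂) (h₁ x₁) (h₁ x₂) (p₁ x₁ x₂ hx),
    fun y₁ y₂ hy => inner (fun x z => hB x y₁ z) (fun x z => hB x y₂ z) (h₂ y₁) (h₂ y₂)
      (p₂ y₁ y₂ hy),
    fun z₁ z₂ hz => inner (fun x y => hB x y z₁) (fun x y => hB x y z₂) (h₃ z₁) (h₃ z₂)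
      (p₃ z₁ z₂ hz)⟩

theorem stmt18 (v k lam K Lam : ℕ) (A : Fin v → Fin v → ℕ)
    (hA : IsIncidenceMatrix v k lam A)
    (hdiag : ∀ x, A x x = 1)
    (hK : (K : ℤ) = (k : ℤ) * (3 * v + 4 * lam - 2 * k) - 4 * v * lam)
    (hLam : (Lam : ℤ) = (k : ℤ) * ((v : ℤ) - 4 * lam + 2) + 2 * lam * (2 * lam - 1)) :
    IsCube v K Lam (fun x y z => (A x y + A y z + A x z) % 2) := by
  set E : Fin v → Fin v → ℤ := fun i j => (-1) ^ A i j
  set w : ℤ := v - 4 * k + 4 * lam with hw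
  have hsign : ∀ x y z, (-1 : ℤ) ^ ((A x y + A y z + A x z) % 2) = triangleProd E x y z := by
    intro x y z; rw [← neg_one_pow_eq_pow_mod_two, pow_add, pow_add]; rfl
  have hsq : ∀ i j, E i j * E i j = 1 := fun i j => neg_one_pow_mul_self _
  have hEdiag : ∀ x, E x x = -1 := fun x => by simp [E, hdiag]
  have hrow : ∀ i, ∑ j, E i j = v - 2 * k := hA.sum_neg_one_pow
  have hcol : ∀ j, ∑ i, E i j = v - 2 * k := hA.transpose.sum_neg_one_pow
  have hGrow : ∀ i₁ i₂, ∑ j, E i₁ j * E i₂ j = if i₁ = i₂ then (v : ℤ) else w :=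
    hA.sum_neg_one_pow_mul
  have hGcol : ∀ j₁ j₂, ∑ i, E i j₁ * E i j₂ = if j₁ = j₂ then (v : ℤ) else w :=
    hA.transpose.sum_neg_one_pow_mul
  have hT : ∀ x : Fin v, (v - 2 * k : ℤ) * w + -1 * (v - w) = v ^ 2 - 2 * K := fun x => by
    rw [hK, hw]; linear_combination 4 * hA.k_mul_k_sub_one_eq x.pos
  have hW : ∀ x : Fin v, w ^ 2 = v ^ 2 - 4 * K + 4 * Lam := fun x => by
    rw [hK, hLam, hw]; linear_combination 8 * hA.k_mul_k_sub_one_eq x.pos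
  refine isCube_of_sum_sum_neg_one_pow (fun _ _ _ => Nat.lt_succ_iff.mp (Nat.mod_lt _ two_pos))
    (fun x => ?_) (fun y => ?_) (fun z => ?_) (fun x₁ x₂ hx => ?_) (fun y₁ y₂ hy => ?_)
    (fun z₁ z₂ hz => ?_) <;> simp only [hsign]
  · rw [sum_sum_triangleProd_left hGrow, hrow, hEdiag]; exact hT x
  · rw [sum_sum_triangleProd_middle hGrow, hcol, hEdiag]; exact hT y
  · rw [sum_sum_triangleProd_right hGcol, hcol, hEdiag]; exact hT z
  · rw [sum_sum_triangleProd_mul_left hsq, hGrow, if_neg hx]; exact hW x₁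
  · rw [sum_sum_triangleProd_mul_middle hsq, hGcol, hGrow, if_neg hy, ← sq]; exact hW y₁
  · rw [sum_sum_triangleProd_mul_right hsq, hGcol, if_neg hz, ← sq]; exact hW z₁
end

section
/- Let A₀ be the incidence matrix of a doubly regular tournament of order 4t−1 (a symmetric (4t−1,2t−1,t−1) design with A₀ + A₀ᵀ = J − I). Then B(x,y,z) = A₀(x,y)+A₀(y,z)+A₀(z,x) mod 2 is a C³₃(4t−1, (2t−1)(4t+3), (2t−1)(2t+3))-cube. -/
open Finset

/-!
Pass to the `±1` matrix `S = J - 2A₀`. The parity cube is `B = (1 - S_xy S_yz S_zx) / 2`, the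
tournament condition reads `S + Sᵀ = 2I`, the design condition reads `S Sᵀ = 4t I - J`, and `S`
has row sums `1`. Substituting `Sᵀ = 2I - S` gives `S² = 2S - 4t I + J` and `S³ = 2S² - 4t S + J`,
so the layer sums `∑_{y,z} S_xy S_yz S_zx = (S³)_xx` all equal `7 - 12t`. Since `S_yz² = 1`, the
scalar product of two `±1` layers factors as `(S Sᵀ)_{x₁x₂} (Sᵀ S)_{x₁x₂} = (-1)(-1)`, because `S`
commutes with `Sᵀ = 2I - S`. As `B` is invariant under cyclic shifts of `(x, y, z)`, the other two
directions reduce to the first.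
-/

open Matrix

variable {ι : Type*}

def allOnes : Matrix ι ι ℤ := of fun _ _ => 1

def signMatrix (A : ι → ι → ℕ) : Matrix ι ι ℤ := of fun i j => 1 - 2 * (A i j : ℤ)

def parityCube (A : ι → ι → ℕ) (x y z : ι) : ℕ := (A x y + A y z + A z x) % 2

section Pointwise

variable (A : ι → ι → ℕ)

theorem parityCube_cyclic (x y z : ι) : parityCube A x y z = parityCube A y z x := by
  rw [parityCube, parityCube, add_rotate]

theorem parityCube_le_one (x y z : ι) : parityCube A x y z ≤ 1 :=
  Nat.le_of_lt_succ (Nat.mod_lt _ two_pos)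

variable {A}

theorem signMatrix_mul_self_apply (hle : ∀ i j, A i j ≤ 1) (i j : ι) :
    signMatrix A i j * signMatrix A i j = 1 := by
  rcases Nat.le_one_iff_eq_zero_or_eq_one.mp (hle i j) with h | h <;> simp [signMatrix, h]

theorem two_mul_parityCube (hle : ∀ i j, A i j ≤ 1) (x y z : ι) :
    2 * (parityCube A x y z : ℤ) =
      1 - signMatrix A x y * signMatrix A y z * signMatrix A z x := by
  rcases Nat.le_one_iff_eq_zero_or_eq_one.mp (hle x y) with h₁ | h₁ <;>
    rcases Nat.le_one_iff_eq_zero_or_eq_one.mp (hle y z) with h₂ | h₂ <;>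
    rcases Nat.le_one_iff_eq_zero_or_eq_one.mp (hle z x) with h₃ | h₃ <;>
    simp [parityCube, signMatrix, h₁, h₂, h₃]

end Pointwise

section SignMatrix

variable {A : ι → ι → ℕ}

theorem signMatrix_add_transpose [DecidableEq ι]
    (hskew : ∀ x y, A x y + A y x = if x = y then 0 else 1) :
    signMatrix A + (signMatrix A)ᵀ = 2 := by
  ext i j
  have h := hskew i j
  rw [Matrix.add_apply, transpose_apply, ofNat_apply]
  simp only [signMatrix, of_apply]
  split_ifs at h ⊢ <;> push_cast <;> omega

theorem signMatrix_mul_allOnes [Fintype ι] {k : ℕ} (hrow : ∀ i, ∑ j, A i j = k) :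
    signMatrix A * allOnes = ((Fintype.card ι : ℤ) - 2 * k) • allOnes := by
  ext i j
  have hrowℤ : ∑ j, (A i j : ℤ) = k := by exact_mod_cast hrow i
  simp only [mul_apply, signMatrix, allOnes, of_apply, mul_one, Matrix.smul_apply, smul_eq_mul,
    sum_sub_distrib, ← mul_sum, hrowℤ, sum_const, card_univ, nsmul_eq_mul]

theorem IsIncidenceMatrix.signMatrix_mul_transpose {v k lam : ℕ} {A : Fin v → Fin v → ℕ}
    (hA : IsIncidenceMatrix v k lam A) :
    signMatrix A * (signMatrix A)ᵀ =
      (4 * ((k : ℤ) - lam)) • 1 + ((v : ℤ) - 4 * k + 4 * lam) • allOnes := by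
  obtain ⟨hle, hrow, -, hrowIP, -⟩ := hA
  ext i j
  simp only [Matrix.add_apply, Matrix.smul_apply, one_apply, allOnes, of_apply, smul_eq_mul]
  rcases eq_or_ne i j with rfl | hne
  · simp only [mul_apply, transpose_apply, signMatrix_mul_self_apply hle, sum_const, card_univ,
      Fintype.card_fin, if_true, nsmul_eq_mul, mul_one]
    ring
  · have hrowℤ : ∀ i, ∑ j, (A i j : ℤ) = k := fun i => by exact_mod_cast hrow i
    have hIPℤ : ∑ l, (A i l : ℤ) * A j l = lam := by exact_mod_cast hrowIP i j hne
    have hterm : ∀ l, signMatrix A i l * signMatrix A j l =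
        1 - 2 * (A i l : ℤ) - 2 * A j l + 4 * (A i l * A j l) := fun l => by
      simp only [signMatrix, of_apply]; ring
    simp only [mul_apply, transpose_apply, hterm, sum_add_distrib, sum_sub_distrib, ← mul_sum,
      hrowℤ, hIPℤ, sum_const, card_univ, Fintype.card_fin, if_neg hne, nsmul_eq_mul, mul_one,
      mul_zero]
    ring

end SignMatrix

section SkewMatrix

variable [DecidableEq ι] {S : Matrix ι ι ℤ} {m : ℤ}

theorem apply_self_eq_one_of_add_transpose (hskew : S + Sᵀ = 2) (i : ι) : S i i = 1 := by
  have h := congrFun (congrFun hskew i) i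
  rw [Matrix.add_apply, transpose_apply, ofNat_apply, if_pos rfl] at h
  push_cast at h
  omega

variable [Fintype ι]

theorem transpose_mul_self_of_add_transpose (hskew : S + Sᵀ = 2) : Sᵀ * S = S * Sᵀ := by
  rw [eq_sub_of_add_eq' hskew, sub_mul, mul_sub, two_mul, mul_two]

theorem mul_self_eq_of_add_transpose (hskew : S + Sᵀ = 2) (hgram : S * Sᵀ = m • 1 - allOnes) :
    S * S = 2 * S - m • 1 + allOnes := by
  have h : S * Sᵀ = 2 * S - S * S := by
    rw [eq_sub_of_add_eq' hskew, mul_sub, mul_two, two_mul]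
  rw [hgram] at h
  rw [← sub_sub_cancel (2 * S) (S * S), ← h]
  abel

theorem cube_apply_self_of_add_transpose (hskew : S + Sᵀ = 2)
    (hgram : S * Sᵀ = m • 1 - allOnes) (hrow : S * allOnes = allOnes) (i : ι) :
    (S * S * S) i i = 7 - 3 * m := by
  have hsq := mul_self_eq_of_add_transpose hskew hgram
  have hcube : S * S * S = 2 * (S * S) - m • S + allOnes :=
    calc S * S * S = S * (2 * S - m • 1 + allOnes) := by rw [mul_assoc, hsq]
      _ = 2 * (S * S) - m • S + allOnes := by
        rw [mul_add, mul_sub, hrow, mul_smul_comm, mul_one, ← mul_assoc,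
          show S * 2 = 2 * S by rw [two_mul, mul_two], mul_assoc]
  have hSi := apply_self_eq_one_of_add_transpose hskew i
  have hsqi : (S * S) i i = 3 - m := by
    rw [hsq]
    simp only [Matrix.add_apply, Matrix.sub_apply, Matrix.smul_apply, two_mul, hSi, allOnes,
      of_apply, one_apply_eq, smul_eq_mul]
    ring
  rw [hcube]
  simp only [Matrix.add_apply, Matrix.sub_apply, Matrix.smul_apply, two_mul, hSi, hsqi, allOnes,
    of_apply, smul_eq_mul]
  ring

end SkewMatrix

section CycleSums

variable [Fintype ι] {R : Type*} [CommRing R] (S : Matrix ι ι R)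

theorem sum_sum_cycle (x : ι) : ∑ y, ∑ z, S x y * S y z * S z x = (S * S * S) x x := by
  simp only [mul_apply, sum_mul]
  exact sum_comm

theorem sum_sum_cycle_mul_cycle (hsq : ∀ i j, S i j * S i j = 1) (x₁ x₂ : ι) :
    ∑ y, ∑ z, (S x₁ y * S y z * S z x₁) * (S x₂ y * S y z * S z x₂) =
      (S * Sᵀ) x₁ x₂ * (Sᵀ * S) x₁ x₂ := by
  rw [mul_apply, mul_apply, sum_mul_sum]
  refine sum_congr rfl fun y _ => sum_congr rfl fun z _ => ?_
  simp only [transpose_apply]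
  linear_combination (S x₁ y * S x₂ y * S z x₁ * S z x₂) * hsq y z

end CycleSums

section ParityCubeSums

variable [Fintype ι] {A : ι → ι → ℕ}

theorem two_mul_sum_sum_parityCube (hle : ∀ i j, A i j ≤ 1) (x : ι) :
    2 * ∑ y, ∑ z, (parityCube A x y z : ℤ) =
      Fintype.card ι ^ 2 - (signMatrix A * signMatrix A * signMatrix A) x x := by
  simp only [← sum_sum_cycle, mul_sum, two_mul_parityCube hle, sum_sub_distrib, sum_const,
    card_univ, nsmul_eq_mul]
  ring

theorem four_mul_sum_sum_parityCube_mul (hle : ∀ i j, A i j ≤ 1) (x₁ x₂ : ι) :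
    4 * ∑ y, ∑ z, (parityCube A x₁ y z * parityCube A x₂ y z : ℤ) =
      Fintype.card ι ^ 2 - (signMatrix A * signMatrix A * signMatrix A) x₁ x₁
        - (signMatrix A * signMatrix A * signMatrix A) x₂ x₂
        + (signMatrix A * (signMatrix A)ᵀ) x₁ x₂ * ((signMatrix A)ᵀ * signMatrix A) x₁ x₂ := by
  have hterm : ∀ y z, 4 * (parityCube A x₁ y z * parityCube A x₂ y z : ℤ) =
      (1 - signMatrix A x₁ y * signMatrix A y z * signMatrix A z x₁) *
        (1 - signMatrix A x₂ y * signMatrix A y z * signMatrix A z x₂) := fun y z => by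
    rw [← two_mul_parityCube hle, ← two_mul_parityCube hle]; ring
  simp only [← sum_sum_cycle, ← sum_sum_cycle_mul_cycle _ (signMatrix_mul_self_apply hle),
    mul_sum, hterm, one_sub_mul, mul_one_sub, sum_sub_distrib, sum_const, card_univ, nsmul_eq_mul]
  ring

end ParityCubeSums

theorem isCube_of_cyclic {v k lam : ℕ} (B : Fin v → Fin v → Fin v → ℕ)
    (hcyc : ∀ x y z, B x y z = B y z x) (hle : ∀ x y z, B x y z ≤ 1)
    (hsum : ∀ x, ∑ y, ∑ z, B x y z = k)
    (hprod : ∀ x₁ x₂, x₁ ≠ x₂ → ∑ y, ∑ z, B x₁ y z * B x₂ y z = lam) :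
    IsCube v k lam B := by
  have hcyc₂ : ∀ x y z, B x y z = B z x y := fun x y z => by rw [hcyc, hcyc]
  refine ⟨hle, hsum, fun y => ?_, fun z => ?_, hprod, fun y₁ y₂ hne => ?_, fun z₁ z₂ hne => ?_⟩
  · simp only [hcyc _ y]
    rw [sum_comm, hsum]
  · simp only [hcyc₂ _ _ z, hsum]
  · simp only [hcyc _ y₁, hcyc _ y₂]
    rw [sum_comm, hprod _ _ hne]
  · simp only [hcyc₂ _ _ z₁, hcyc₂ _ _ z₂, hprod _ _ hne]

theorem stmt19 (t : ℕ) (ht : 0 < t) (A : Fin (4 * t - 1) → Fin (4 * t - 1) → ℕ)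
    (hA : IsIncidenceMatrix (4 * t - 1) (2 * t - 1) (t - 1) A)
    (hskew : ∀ x y, A x y + A y x = if x = y then 0 else 1) :
    IsCube (4 * t - 1) ((2 * t - 1) * (4 * t + 3)) ((2 * t - 1) * (2 * t + 3))
      (fun x y z => (A x y + A y z + A z x) % 2) := by
  set S := signMatrix A
  have hv : ((4 * t - 1 : ℕ) : ℤ) = 4 * t - 1 := by omega
  have hk : ((2 * t - 1 : ℕ) : ℤ) = 2 * t - 1 := by omega
  have hl : ((t - 1 : ℕ) : ℤ) = t - 1 := by omega
  have hsym : S + Sᵀ = 2 := signMatrix_add_transpose hskew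
  have hgram : S * Sᵀ = (4 * t : ℤ) • 1 - allOnes := by
    rw [hA.signMatrix_mul_transpose, hv, hk, hl]
    module
  have hrow : S * allOnes = allOnes := by
    rw [signMatrix_mul_allOnes hA.2.1, Fintype.card_fin, hv, hk]
    module
  have hcube : ∀ x, (S * S * S) x x = 7 - 12 * t := fun x => by
    rw [cube_apply_self_of_add_transpose hsym hgram hrow]; ring
  refine isCube_of_cyclic (parityCube A) (parityCube_cyclic A) (parityCube_le_one A)
    (fun x => ?_) (fun x₁ x₂ hne => ?_)
  · have h := two_mul_sum_sum_parityCube hA.1 x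
    rw [hcube, Fintype.card_fin, hv] at h
    zify [show 1 ≤ 2 * t by omega]
    linarith
  · have h := four_mul_sum_sum_parityCube_mul hA.1 x₁ x₂
    have hoff : (S * Sᵀ) x₁ x₂ = -1 := by
      simp only [hgram, Matrix.sub_apply, Matrix.smul_apply, one_apply_ne hne, smul_zero, allOnes,
        of_apply, zero_sub]
    rw [hcube, hcube, Fintype.card_fin, hv, transpose_mul_self_of_add_transpose hsym, hoff] at h
    zify [show 1 ≤ 2 * t by omega]
    linarith
end
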